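/- Let L̂ be a real symmetric positive semidefinite N×N matrix. Then the heat kernel exp(-p • L̂) converges entrywise as p → ∞; moreover its limit is the matrix of the orthogonal projection of ℝ^N (with the standard inner product) onto the kernel of L̂. Consequently, for every pair of indices (u,v), the function p ↦ exp(-p • L̂)(u,v) has a finite limit as p → ∞ (the 'stable' heat kernel value used by the attention mechanism). -/

import Mathlib

/-!
By the spectral theorem, `exp (-p • L̂) = f_p(L̂)` in the continuous functional calculus, with
`f_p x = exp (-p x)`. On the spectrum of `L̂`, a finite subset of `[0, ∞)`, the functions `f_p`
converge to the indicator `χ` of `{0}`, hence `exp (-p • L̂) → χ(L̂)`. Since `χ² = χ`, `x χ(x) = 0`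
and `x⁻¹ x = 1 - χ(x)`, the matrix `χ(L̂)` is a self-adjoint idempotent that is annihilated by `L̂`
and fixes `ker L̂`: it is the orthogonal projection onto `ker L̂`.
-/

open NormedSpace Filter Topology
open scoped Matrix ComplexOrder

theorem Set.Finite.tendstoUniformlyOn {α β ι : Type*} [UniformSpace β] {F : ι → α → β}
    {f : α → β} {l : Filter ι} {s : Set α} (hs : s.Finite)
    (h : ∀ x ∈ s, Tendsto (F · x) l (𝓝 (f x))) : TendstoUniformlyOn F f l s :=
  fun _u hu ↦ (eventually_all_finite hs).2 fun x hx ↦ h x hx (mem_nhds_left (f x) hu)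

theorem Real.tendsto_exp_neg_mul_atTop {x : ℝ} (hx : 0 ≤ x) :
    Tendsto (fun p : ℝ ↦ Real.exp (-p * x)) atTop (𝓝 (({0} : Set ℝ).indicator 1 x)) := by
  rcases hx.eq_or_lt with rfl | hx
  · simp
  · rw [Set.indicator_of_notMem (Set.notMem_singleton_iff.mpr hx.ne')]
    exact Real.tendsto_exp_atBot.comp (tendsto_neg_atTop_atBot.atBot_mul_const hx)

theorem IsStarProjection.eq_starProjection_ker_of_mul_eq {𝕜 E : Type*} [RCLike 𝕜]
    [NormedAddCommGroup E] [InnerProductSpace 𝕜 E] [CompleteSpace E] {P T S : E →L[𝕜] E}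
    [T.ker.HasOrthogonalProjection] (hP : IsStarProjection P) (hTP : T * P = 0)
    (hST : S * T = 1 - P) : P = T.ker.starProjection := by
  refine ContinuousLinearMap.IsStarProjection.ext hP isStarProjection_starProjection ?_
  rw [Submodule.range_starProjection]
  ext x
  constructor
  · rintro ⟨y, rfl⟩
    exact congr($hTP y)
  · intro (hx : T x = 0)
    have hPx : x - P x = 0 := by simpa [hx] using congr($hST x).symm
    exact ⟨x, (sub_eq_zero.mp hPx).symm⟩

namespace Matrix

variable {n 𝕜 : Type*} [Fintype n] [DecidableEq n] [RCLike 𝕜] {A : Matrix n n 𝕜}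

theorem IsHermitian.exp_smul_eq_cfc (hA : A.IsHermitian) (t : ℝ) :
    NormedSpace.exp (t • A) = cfc (fun x ↦ Real.exp (t * x)) A := by
  let _ := Matrix.linftyOpNormedRing (n := n) (α := 𝕜)
  let _ := Matrix.linftyOpNormedAlgebra (R := ℝ) (n := n) (α := 𝕜)
  rw [cfc_comp_const_mul t Real.exp A]
  -- `exp` only sees the topology, so any matrix norm will do; the functional calculus instance
  -- has to be given by hand because it is stated for the ring structure `Matrix.instRing`.
  exact (@CFC.real_exp_eq_normedSpace_exp _ _ _ _ IsHermitian.instContinuousFunctionalCalculus _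
    (.smul (.all t) hA.isSelfAdjoint)).symm

theorem PosSemidef.tendsto_exp_neg_smul_atTop (hA : A.PosSemidef) :
    Tendsto (fun p : ℝ ↦ NormedSpace.exp ((-p) • A)) atTop
      (𝓝 (cfc (({0} : Set ℝ).indicator 1) A)) := by
  simp_rw [hA.isHermitian.exp_smul_eq_cfc]
  refine tendsto_cfc_fun (A.finite_real_spectrum.tendstoUniformlyOn fun x hx ↦ ?_)
    (.of_forall fun _ ↦ A.finite_real_spectrum.continuousOn _)
  obtain ⟨i, rfl⟩ := hA.isHermitian.spectrum_real_eq_range_eigenvalues ▸ hx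
  exact Real.tendsto_exp_neg_mul_atTop (hA.eigenvalues_nonneg i)

theorem isStarProjection_cfc_indicator_zero (A : Matrix n n 𝕜) :
    IsStarProjection (cfc (({0} : Set ℝ).indicator 1) A) := by
  refine ⟨?_, cfc_predicate _ A⟩
  rw [IsIdempotentElem, ← cfc_mul _ _ A (A.finite_real_spectrum.continuousOn _)
    (A.finite_real_spectrum.continuousOn _)]
  congr 1 with x
  by_cases hx : x = 0 <;> simp [hx]

theorem IsHermitian.mul_cfc_indicator_zero (hA : A.IsHermitian) :
    A * cfc (({0} : Set ℝ).indicator 1) A = 0 := by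
  conv_lhs => enter [1]; rw [← cfc_id' ℝ A hA.isSelfAdjoint]
  rw [← cfc_mul _ _ A (A.finite_real_spectrum.continuousOn _)
    (A.finite_real_spectrum.continuousOn _), ← cfc_zero ℝ A]
  congr 1 with x
  by_cases hx : x = 0 <;> simp [hx]

-- Pointwise this is `x⁻¹ * x = 1 - indicator {0} 1 x`, true at `x = 0` because `0⁻¹ = 0`.
theorem IsHermitian.cfc_inv_mul_self (hA : A.IsHermitian) :
    cfc (·⁻¹ : ℝ → ℝ) A * A = 1 - cfc (({0} : Set ℝ).indicator 1) A := by
  conv_lhs => enter [2]; rw [← cfc_id' ℝ A hA.isSelfAdjoint]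
  rw [← cfc_mul _ _ A (A.finite_real_spectrum.continuousOn _)
    (A.finite_real_spectrum.continuousOn _), ← cfc_one ℝ A hA.isSelfAdjoint,
    ← cfc_sub _ _ A (A.finite_real_spectrum.continuousOn _)
    (A.finite_real_spectrum.continuousOn _)]
  congr 1 with x
  by_cases hx : x = 0 <;> simp [hx]

theorem IsHermitian.toEuclideanCLM_cfc_indicator_zero (hA : A.IsHermitian) :
    toEuclideanCLM (n := n) (𝕜 := 𝕜) (cfc (({0} : Set ℝ).indicator 1) A) =
      (LinearMap.ker (toEuclideanLin A)).starProjection := by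
  have hP := (isStarProjection_cfc_indicator_zero A).map (toEuclideanCLM (n := n) (𝕜 := 𝕜))
  refine hP.eq_starProjection_ker_of_mul_eq (T := toEuclideanCLM (n := n) (𝕜 := 𝕜) A)
    (S := toEuclideanCLM (n := n) (𝕜 := 𝕜) (cfc (·⁻¹ : ℝ → ℝ) A)) ?_ ?_
  · rw [← map_mul, hA.mul_cfc_indicator_zero, map_zero]
  · rw [← map_mul, hA.cfc_inv_mul_self, map_sub, map_one]

end Matrix

/-- For a real symmetric positive semidefinite `L̂`, the heat kernel `exp (-p • L̂)`
converges entrywise as `p → ∞` to the matrix of the orthogonal projection of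
Euclidean space onto the kernel of `L̂`; in particular every entry has a finite
limit (the "stable" heat kernel value). -/
theorem heat_kernel_tendsto_kernel_projection
    (N : ℕ) (Lhat : Matrix (Fin N) (Fin N) ℝ) (hsymm : Lhat.IsSymm)
    (hpsd : ∀ x : Fin N → ℝ, 0 ≤ x ⬝ᵥ Lhat.mulVec x) :
    (∀ u v : Fin N,
      Filter.Tendsto (fun p : ℝ => exp ((-p) • Lhat) u v) Filter.atTop
        (nhds (Matrix.toEuclideanLin.symm
          (((LinearMap.ker (Matrix.toEuclideanLin Lhat)).subtypeL.comp
            (Submodule.orthogonalProjectionOnto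
              (LinearMap.ker (Matrix.toEuclideanLin Lhat)))).toLinearMap)
          u v))) ∧
    (∀ u v : Fin N, ∃ c : ℝ,
      Filter.Tendsto (fun p : ℝ => exp ((-p) • Lhat) u v) Filter.atTop (nhds c)) := by
  have hA : Lhat.PosSemidef :=
    .of_dotProduct_mulVec_nonneg (Matrix.isHermitian_iff_isSymm.mpr hsymm) (by simpa using hpsd)
  have hlim : ∀ u v, Tendsto (fun p : ℝ ↦ exp ((-p) • Lhat) u v) atTop
      (𝓝 (cfc (({0} : Set ℝ).indicator 1) Lhat u v)) := fun u v ↦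
    ((continuous_apply_apply u v).tendsto _).comp hA.tendsto_exp_neg_smul_atTop
  have hproj : Matrix.toEuclideanLin.symm
      ((LinearMap.ker (Matrix.toEuclideanLin Lhat)).starProjection : _ →ₗ[ℝ] _) =
      cfc (({0} : Set ℝ).indicator 1) Lhat := by
    rw [← hA.isHermitian.toEuclideanCLM_cfc_indicator_zero,
      Matrix.coe_toEuclideanCLM_eq_toEuclideanLin, LinearEquiv.symm_apply_apply]
  exact ⟨fun u v ↦ hproj ▸ hlim u v, fun u v ↦ ⟨_, hlim u v⟩⟩
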